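/- arXiv:2505.12398 — 8 statements merged into one kernel-verified Lean document; each statement's English description precedes it below -/
import Mathlib

section
/- Let X be a finite set and let p, q be probability mass functions on X (the target and draft distributions). Define the speculative sampling output: sample x ~ q; accept x with probability min(1, p(x)/q(x)); if rejected, resample y from the normalized residual distribution norm([p - q]_+), where [t]_+ = max(t,0). Then for every z in X, the probability that the output equals z is exactly p(z). -/
/-- **Losslessness of single-token speculative sampling.**
`p` is the target pmf and `q` the draft pmf on a finite nonempty set `X`.
A token `x` is sampled from `q` and accepted with probability `min(1, p x / q x)`
(so the probability of producing `z` by direct acceptance is `min (p z) (q z)`);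
on rejection (total probability `∑ x, max (q x - p x) 0`) a token is resampled
from the normalized residual `norm([p - q]₊)`.  The output distribution is `p`. -/
theorem speculative_sampling_lossless
    {X : Type*} [Fintype X] [Nonempty X]
    (p q : X → ℝ)
    (hp : ∀ x, 0 ≤ p x) (hq : ∀ x, 0 ≤ q x)
    (hps : ∑ x, p x = 1) (hqs : ∑ x, q x = 1)
    (hpq : p ≠ q) :
    ∀ z, min (p z) (q z)
        + (∑ x, max (q x - p x) 0)
          * (max (p z - q z) 0 / ∑ w, max (p w - q w) 0)
      = p z := by
  intro z
  set S := ∑ w, max (p w - q w) 0 with hS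
  have hSeq : ∑ x, max (q x - p x) 0 = S := by
    have h : ∑ x, (max (p x - q x) 0 - max (q x - p x) 0) = 0 := by
      have : ∀ x, max (p x - q x) 0 - max (q x - p x) 0 = p x - q x := by
        intro x
        rcases le_total (p x) (q x) with h | h <;>
          simp [max_eq_left, max_eq_right, sub_nonneg.mpr h, sub_nonpos.mpr h] <;> linarith
      simp only [this, Finset.sum_sub_distrib, hps, hqs, sub_self]
    rw [Finset.sum_sub_distrib] at h
    linarith
  have hSpos : 0 < S := by
    rcases lt_or_eq_of_le (Finset.sum_nonneg (fun w _ => le_max_right _ 0) : (0:ℝ) ≤ S) with h | h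
    · exact h
    · exfalso
      apply hpq
      funext x
      have hall : ∀ x ∈ Finset.univ, max (p x - q x) 0 = 0 :=
        (Finset.sum_eq_zero_iff_of_nonneg (fun w _ => le_max_right _ 0)).mp h.symm
      have hle : ∀ x, p x ≤ q x := fun x => by
        have := hall x (Finset.mem_univ x)
        by_contra hc
        push_neg at hc
        have : max (p x - q x) 0 = p x - q x := max_eq_left (by linarith)
        linarith [hall x (Finset.mem_univ x)]
      have hsum : ∑ x, (q x - p x) = 0 := by
        rw [Finset.sum_sub_distrib, hps, hqs, sub_self]
      have := (Finset.sum_eq_zero_iff_of_nonneg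
        (fun x _ => sub_nonneg.mpr (hle x))).mp hsum x (Finset.mem_univ x)
      linarith
  rw [hSeq, mul_div_assoc', mul_comm, mul_div_assoc, div_self hSpos.ne', mul_one]
  rcases le_total (p z) (q z) with h | h <;>
    simp [min_eq_left, min_eq_right, h, max_eq_right (sub_nonpos.mpr h),
      max_eq_left (sub_nonneg.mpr h)]
end

section
/- Two-step recursive rejection sampling without replacement is lossless: let p, q be pmfs on finite X with p ≠ q. Sample X1 ~ q and accept with probability min(1, p(X1)/q(X1)). If rejected, set p1 = norm([p - q]_+) and q1 = norm(q restricted to X \ {X1}); sample X2 ~ q1 and accept with probability min(1, p1(X2)/q1(X2)); if rejected, output a sample from norm([p1 - q1]_+). Then the marginal distribution of the output token is exactly p. -/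
private lemma min_add_max_sub (a b : ℝ) : min a b + max (a - b) 0 = a := by
  rcases le_total a b with h | h
  · rw [min_eq_left h, max_eq_right (by linarith)]; ring
  · rw [min_eq_right h, max_eq_left (by linarith)]; ring

private lemma max_swap_sub (a b : ℝ) : max (b - a) 0 = max (a - b) 0 + (b - a) := by
  rcases le_total a b with h | h
  · rw [max_eq_left (by linarith), max_eq_right (by linarith)]; ring
  · rw [max_eq_right (by linarith), max_eq_left (by linarith)]; ring

/-- **Two-step recursive rejection sampling without replacement is lossless.**
Sample `X1 ~ q`, accept with probability `min 1 (p X1 / q X1)` (so the probability of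
outputting `z` directly is `min (p z) (q z)`, and the probability of rejecting `x1` is
`max (q x1 - p x1) 0`).  On rejection set `p1 = norm([p - q]₊)` and
`q1 x1 = norm(q with q x1 := 0)`; sample `X2 ~ q1 x1`, accept with probability
`min 1 (p1 X2 / q1 x1 X2)`; on a second rejection output a sample from
`norm([p1 - q1 x1]₊)`.  The marginal distribution of the output token is exactly `p`. -/
theorem two_step_rrsw_lossless
    {X : Type*} [Fintype X] [Nonempty X] [DecidableEq X]
    (p q : X → ℝ)
    (hp : ∀ x, 0 ≤ p x) (hq : ∀ x, 0 ≤ q x)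
    (hps : ∑ x, p x = 1) (hqs : ∑ x, q x = 1)
    (hpq : p ≠ q)
    (p1 : X → ℝ)
    (hp1 : p1 = fun z => max (p z - q z) 0 / ∑ w, max (p w - q w) 0)
    (q1 : X → X → ℝ)
    (hq1 : q1 = fun x1 z => if z = x1 then 0 else q z / (1 - q x1))
    (hmass : ∀ x1, 0 < max (q x1 - p x1) 0 →
      q x1 < 1 ∧ 0 < ∑ w, max (p1 w - q1 x1 w) 0) :
    ∀ z, min (p z) (q z)
        + ∑ x1, max (q x1 - p x1) 0 *
            (min (p1 z) (q1 x1 z)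
              + (∑ x2, max (q1 x1 x2 - p1 x2) 0) *
                (max (p1 z - q1 x1 z) 0 / ∑ w, max (p1 w - q1 x1 w) 0))
      = p z := by
  intro z
  have hS : 0 < ∑ w, max (p w - q w) 0 := by
    by_contra h
    push_neg at h
    have hle : ∀ w, p w ≤ q w := by
      intro w
      by_contra hw
      push_neg at hw
      have h1 : 0 < max (p w - q w) 0 := lt_max_iff.mpr (Or.inl (by linarith))
      have h2 : max (p w - q w) 0 ≤ ∑ w, max (p w - q w) 0 :=
        Finset.single_le_sum (f := fun w => max (p w - q w) 0) (fun i _ => le_max_right _ 0) (Finset.mem_univ w)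
      linarith
    apply hpq
    funext w
    by_contra hw
    have : ∑ x, p x < ∑ x, q x :=
      Finset.sum_lt_sum (fun i _ => hle i) ⟨w, Finset.mem_univ w, lt_of_le_of_ne (hle w) hw⟩
    linarith
  -- sum of positive parts = sum of negative parts
  have hswap : ∑ x, max (q x - p x) 0 = ∑ w, max (p w - q w) 0 := by
    calc ∑ x, max (q x - p x) 0 = ∑ x, (max (p x - q x) 0 + (q x - p x)) :=
          Finset.sum_congr rfl (fun x _ => max_swap_sub (p x) (q x))
      _ = ∑ w, max (p w - q w) 0 + (∑ x, q x - ∑ x, p x) := by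
          rw [Finset.sum_add_distrib, Finset.sum_sub_distrib]
      _ = ∑ w, max (p w - q w) 0 := by rw [hps, hqs]; ring
  have hp1sum : ∑ w, p1 w = 1 := by
    rw [hp1]
    simp only
    rw [← Finset.sum_div, div_self (ne_of_gt hS)]
  have key : ∀ x1, max (q x1 - p x1) 0 *
      (min (p1 z) (q1 x1 z)
        + (∑ x2, max (q1 x1 x2 - p1 x2) 0) *
          (max (p1 z - q1 x1 z) 0 / ∑ w, max (p1 w - q1 x1 w) 0))
      = max (q x1 - p x1) 0 * p1 z := by
    intro x1
    rcases eq_or_lt_of_le (le_max_right (q x1 - p x1) 0) with h0 | hpos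
    · rw [← h0, zero_mul, zero_mul]
    · obtain ⟨hq1lt, hD⟩ := hmass x1 hpos
      congr 1
      have hq1sum : ∑ w, q1 x1 w = 1 := by
        rw [hq1]
        simp only
        rw [← Finset.add_sum_erase _ _ (Finset.mem_univ x1), if_pos rfl, zero_add,
          Finset.sum_congr rfl (fun w hw => if_neg (Finset.ne_of_mem_erase hw)),
          ← Finset.sum_div]
        have hrest : ∑ w ∈ Finset.univ.erase x1, q w = 1 - q x1 := by
          have h := Finset.add_sum_erase Finset.univ q (Finset.mem_univ x1)
          linarith [hqs]
        rw [hrest, div_self (by linarith)]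
      have hDswap : ∑ x2, max (q1 x1 x2 - p1 x2) 0 = ∑ w, max (p1 w - q1 x1 w) 0 := by
        calc ∑ x2, max (q1 x1 x2 - p1 x2) 0
            = ∑ x2, (max (p1 x2 - q1 x1 x2) 0 + (q1 x1 x2 - p1 x2)) :=
              Finset.sum_congr rfl (fun x2 _ => max_swap_sub (p1 x2) (q1 x1 x2))
          _ = ∑ w, max (p1 w - q1 x1 w) 0 + (∑ x2, q1 x1 x2 - ∑ x2, p1 x2) := by
              rw [Finset.sum_add_distrib, Finset.sum_sub_distrib]
          _ = ∑ w, max (p1 w - q1 x1 w) 0 := by rw [hp1sum, hq1sum]; ring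
      rw [hDswap, mul_comm, div_mul_cancel₀ _ (ne_of_gt hD), min_add_max_sub]
  rw [Finset.sum_congr rfl (fun x1 _ => key x1), ← Finset.sum_mul, hswap, hp1]
  simp only
  rw [mul_comm, div_mul_cancel₀ _ (ne_of_gt hS), min_add_max_sub]
end

section
/- Define for a chain α = (α_0, α_1, ..., α_γ) with per-step draft distributions q(·|prefix) and target distributions p(·|prefix) the traversal acceptance rates recursively by p^ini(α_0) = 1 and p^ini(α_i) = min( p^ini(α_{i-1}) · p(α_i|α^{i-1}) / q(α_i|α^{i-1}), 1 ). Then for all i, p^ini(α_i) ≥ ∏_{k=1}^{i} min( p(α_k|α^{k-1}) / q(α_k|α^{k-1}), 1 ), i.e., the traversal (sequence-level) acceptance probability of the length-i prefix is at least the token-level acceptance probability. -/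
/-- **Traversal acceptance dominates token-level acceptance along a chain.**
Let `r k = p(α_k | α^{k-1}) / q(α_k | α^{k-1}) ≥ 0` be the probability ratios along a
drafted chain, and define the traversal acceptance rates by `a 0 = 1`,
`a (i+1) = min (a i * r (i+1)) 1`.  Then for every `i`,
`a i ≥ ∏_{k=1}^{i} min (r k) 1`, the token-level acceptance probability. -/
theorem traversal_ge_token_level
    (r : ℕ → ℝ) (hr : ∀ k, 0 ≤ r k)
    (a : ℕ → ℝ) (ha0 : a 0 = 1)
    (ha : ∀ i, a (i + 1) = min (a i * r (i + 1)) 1) :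
    ∀ i, (∏ k ∈ Finset.Icc 1 i, min (r k) 1) ≤ a i := by
  have hnn : ∀ i, 0 ≤ ∏ k ∈ Finset.Icc 1 i, min (r k) 1 := by
    intro i
    exact Finset.prod_nonneg fun k _ => le_min (hr k) zero_le_one
  have hle1 : ∀ i, (∏ k ∈ Finset.Icc 1 i, min (r k) 1) ≤ 1 := by
    intro i
    exact Finset.prod_le_one (fun k _ => le_min (hr k) zero_le_one)
      (fun k _ => min_le_right _ _)
  intro i
  induction i with
  | zero => simp [ha0]
  | succ n ih =>
    rw [ha n, Finset.prod_Icc_succ_top (by omega)]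
    refine le_min ?_ ?_
    swap
    · rw [← Finset.prod_Icc_succ_top (by omega : 1 ≤ n + 1)]; exact hle1 (n + 1)
    calc (∏ k ∈ Finset.Icc 1 n, min (r k) 1) * min (r (n+1)) 1
        ≤ a n * r (n+1) :=
          mul_le_mul ih (min_le_left _ _) (le_min (hr _) zero_le_one)
            (le_trans (hnn n) ih)
end

section
/- Let p, q be pmfs on finite X and 0 ≤ c ≤ 1 a scalar (the parent's acceptance rate). Define the scaled residual S = ∑_x max(c·p(x) - q(x), 0) and the updated parent acceptance rate c' = S / (S + 1 - c). Then 0 ≤ c' ≤ c, i.e., rejection of a child never increases the parent's acceptance probability. -/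
/-- **Rejection of a child never increases the parent's acceptance rate.**
For pmfs `p, q` on finite `X`, parent acceptance rate `c ∈ [0,1]`, scaled residual mass
`S = ∑ x, max (c * p x - q x) 0` with `S + 1 - c > 0`, the updated parent acceptance
rate `c' = S / (S + 1 - c)` satisfies `0 ≤ c' ≤ c`. -/
theorem updated_parent_rate_le
    {X : Type*} [Fintype X]
    (p q : X → ℝ)
    (hp : ∀ x, 0 ≤ p x) (hq : ∀ x, 0 ≤ q x)
    (hps : ∑ x, p x = 1) (hqs : ∑ x, q x = 1)
    (c : ℝ) (hc0 : 0 ≤ c) (hc1 : c ≤ 1)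
    (hpos : 0 < (∑ x, max (c * p x - q x) 0) + 1 - c) :
    0 ≤ (∑ x, max (c * p x - q x) 0) / ((∑ x, max (c * p x - q x) 0) + 1 - c) ∧
    (∑ x, max (c * p x - q x) 0) / ((∑ x, max (c * p x - q x) 0) + 1 - c) ≤ c := by
  set S := ∑ x, max (c * p x - q x) 0 with hS
  have hS0 : 0 ≤ S := Finset.sum_nonneg fun x _ => le_max_right _ _
  have hSc : S ≤ c := by
    calc S ≤ ∑ x, c * p x := Finset.sum_le_sum fun x _ => by
            have := hq x; simp [max_le_iff]; constructor <;> nlinarith [hp x]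
      _ = c := by rw [← Finset.mul_sum, hps, mul_one]
  constructor
  · exact div_nonneg hS0 hpos.le
  · rw [div_le_iff₀ hpos]
    nlinarith
end

section
/- With the same setup (X finite, p, q pmfs, 0 ≤ c ≤ 1, S = ∑_x max(c·p(x)-q(x),0), c' = S/(S+1-c)), the total acceptance probability satisfies: ∑_x min(c·p(x), q(x)) + c'·∑_x max(q(x) - c·p(x), 0) = c. That is, the probability that Traversal Verification accepts the parent node (either via some child directly or after exhausting children) equals exactly c. -/
/-- **Traversal Verification accepts the parent with total probability exactly `c`.**
With `S = ∑ x, max (c * p x - q x) 0`, `S + 1 - c > 0` and `c' = S / (S + 1 - c)`: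
`∑ x, min (c * p x) (q x) + c' * ∑ x, max (q x - c * p x) 0 = c`. -/
theorem traversal_total_acceptance_eq_c
    {X : Type*} [Fintype X]
    (p q : X → ℝ)
    (hp : ∀ x, 0 ≤ p x) (hq : ∀ x, 0 ≤ q x)
    (hps : ∑ x, p x = 1) (hqs : ∑ x, q x = 1)
    (c : ℝ) (hc0 : 0 ≤ c) (hc1 : c ≤ 1)
    (hpos : 0 < (∑ x, max (c * p x - q x) 0) + 1 - c) :
    (∑ x, min (c * p x) (q x))
      + ((∑ x, max (c * p x - q x) 0) / ((∑ x, max (c * p x - q x) 0) + 1 - c))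
        * (∑ x, max (q x - c * p x) 0)
      = c := by
  set S : ℝ := ∑ x, max (c * p x - q x) 0 with hS
  have h1 : ∑ x, max (q x - c * p x) 0 = S + 1 - c := by
    have : ∀ x : X, max (q x - c * p x) 0 = max (c * p x - q x) 0 + (q x - c * p x) := by
      intro x
      rcases le_total (q x - c * p x) 0 with h | h
      · rw [max_eq_right h, max_eq_left (by linarith)]; ring
      · rw [max_eq_left h, max_eq_right (by linarith)]; ring
    rw [Finset.sum_congr rfl (fun x _ => this x), Finset.sum_add_distrib,
      Finset.sum_sub_distrib, ← Finset.mul_sum, hps, hqs, hS]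
    ring
  have h2 : ∑ x, min (c * p x) (q x) = c - S := by
    have : ∀ x : X, min (c * p x) (q x) = c * p x - max (c * p x - q x) 0 := by
      intro x
      rcases le_total (c * p x) (q x) with h | h
      · rw [min_eq_left h, max_eq_right (by linarith)]; ring
      · rw [min_eq_right h, max_eq_left (by linarith)]; ring
    rw [Finset.sum_congr rfl (fun x _ => this x), Finset.sum_sub_distrib,
      ← Finset.mul_sum, hps, hS]
    ring
  rw [h1, h2, div_mul_cancel₀ _ (ne_of_gt hpos)]
  ring
end

section
/- Consider a two-token chain with draft conditionals q_1, q_2 and target conditionals p_1, p_2 (so tokens X_1 ~ q_1(·), X_2 ~ q_2(·|X_1)). The expected number of accepted draft tokens under traversal (block) verification is E[N] = ∑_{x1} min(p_1(x1), q_1(x1)) + ∑_{x1, x2} q_1(x1) q_2(x2|x1) · min(1, min(1, p_1(x1)/q_1(x1)) · p_2(x2|x1)/q_2(x2|x1)), and this is greater than or equal to the token-level expectation ∑_{x1} min(p_1(x1), q_1(x1)) + ∑_{x1, x2} q_2(x2|x1) · min(p_1(x1), q_1(x1)) · min(1, p_2(x2|x1)/q_2(x2|x1)). -/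
/-- **Two-token chain: traversal/block expected acceptance dominates token-level.**
With root distribution drafts `q1` (target `p1`) and conditional drafts `q2 x1`
(targets `p2 x1`), all pmfs with positive draft probabilities, the expected number of
accepted tokens under traversal (block) verification,
`∑ x1, min (p1 x1) (q1 x1)
  + ∑ x1, ∑ x2, q1 x1 * q2 x1 x2 * min (min 1 (p1 x1 / q1 x1) * (p2 x1 x2 / q2 x1 x2)) 1`,
is at least the token-level expectation
`∑ x1, min (p1 x1) (q1 x1)
  + ∑ x1, ∑ x2, q2 x1 x2 * min (p1 x1) (q1 x1) * min 1 (p2 x1 x2 / q2 x1 x2)`. -/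
theorem two_token_traversal_expected_length_ge_token_level
    {X : Type*} [Fintype X]
    (p1 q1 : X → ℝ) (p2 q2 : X → X → ℝ)
    (hp1 : ∀ x, 0 ≤ p1 x) (hq1 : ∀ x, 0 < q1 x)
    (hp1s : ∑ x, p1 x = 1) (hq1s : ∑ x, q1 x = 1)
    (hp2 : ∀ x1 x2, 0 ≤ p2 x1 x2) (hq2 : ∀ x1 x2, 0 < q2 x1 x2)
    (hp2s : ∀ x1, ∑ x2, p2 x1 x2 = 1) (hq2s : ∀ x1, ∑ x2, q2 x1 x2 = 1) :
    (∑ x1, min (p1 x1) (q1 x1))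
      + ∑ x1, ∑ x2, q2 x1 x2 * min (p1 x1) (q1 x1) * min 1 (p2 x1 x2 / q2 x1 x2)
    ≤ (∑ x1, min (p1 x1) (q1 x1))
      + ∑ x1, ∑ x2, q1 x1 * q2 x1 x2 *
          min (min 1 (p1 x1 / q1 x1) * (p2 x1 x2 / q2 x1 x2)) 1 := by
  apply add_le_add_right
  refine Finset.sum_le_sum fun x1 _ => Finset.sum_le_sum fun x2 _ => ?_
  have ha1 : q1 x1 > 0 := hq1 x1
  have ha2 : q2 x1 x2 > 0 := hq2 x1 x2
  have key : min (p1 x1) (q1 x1) = q1 x1 * min 1 (p1 x1 / q1 x1) := by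
    rw [mul_min_of_nonneg _ _ ha1.le, mul_one, mul_div_cancel₀ _ ha1.ne', min_comm]
  rw [key]
  have hb : 0 ≤ p2 x1 x2 / q2 x1 x2 := div_nonneg (hp2 x1 x2) ha2.le
  have hma : 0 ≤ min 1 (p1 x1 / q1 x1) := le_min zero_le_one (div_nonneg (hp1 x1) ha1.le)
  calc q2 x1 x2 * (q1 x1 * min 1 (p1 x1 / q1 x1)) * min 1 (p2 x1 x2 / q2 x1 x2)
      = q1 x1 * q2 x1 x2 * (min 1 (p1 x1 / q1 x1) * min 1 (p2 x1 x2 / q2 x1 x2)) := by ring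
    _ ≤ q1 x1 * q2 x1 x2 * min (min 1 (p1 x1 / q1 x1) * (p2 x1 x2 / q2 x1 x2)) 1 := by
        apply mul_le_mul_of_nonneg_left _ (by positivity)
        refine le_min (mul_le_mul_of_nonneg_left (min_le_right _ _) hma) ?_
        exact mul_le_one₀ (min_le_left _ _) (le_min zero_le_one hb) (min_le_left _ _)
end

section
/- Chain traversal-verification distributional correctness (depth 2): let q_1, p_1 be pmfs on finite X and for each x1, q_2(·|x1), p_2(·|x1) pmfs on X. Run the process: sample x1 ~ q_1, x2 ~ q_2(·|x1); accept the pair with probability a_2 = min(min(1, p_1(x1)/q_1(x1))·p_2(x2|x1)/q_2(x2|x1), 1); if rejected, update the parent acceptance rate via c' = S/(S + 1 - c) with c = min(1, p_1(x1)/q_1(x1)) and S = ∑_z max(c·p_2(z|x1) - q_2(z|x1), 0); accept x1 alone with probability c' and output a fresh token from norm([c·p_2 - q_2]_+)(·|x1); if x1 is also rejected, resample a root-level token from norm([p_1 - q_1]_+) and then a token from p_2 conditioned on it. Then the joint distribution of the output two-token sequence is exactly p_1(z1)·p_2(z2|z1). -/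
/-- **Losslessness of Traversal Verification for a depth-2 single chain.**
Sample `x1 ~ q1`, `x2 ~ q2 x1`.  Accept the pair with probability
`a2 x1 x2 = min (min 1 (p1 x1 / q1 x1) * (p2 x1 x2 / q2 x1 x2)) 1`.
On rejection, with `c x1 = min 1 (p1 x1 / q1 x1)` and
`S x1 = ∑ z, max (c x1 * p2 x1 z - q2 x1 z) 0`, accept `x1` alone with the updated
rate `c' x1 = S x1 / (S x1 + 1 - c x1)` and output a fresh second token from the
scaled residual `M' x1 z = max (c x1 * p2 x1 z - q2 x1 z) 0 / S x1`; if `x1` is also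
rejected, resample a root token from `norm([p1 - q1]₊)` and then a second token from
the target `p2`.  The joint output distribution is exactly `p1 z1 * p2 z1 z2`. -/
theorem depth_two_traversal_verification_lossless
    {X : Type*} [Fintype X] [Nonempty X]
    (p1 q1 : X → ℝ) (p2 q2 : X → X → ℝ)
    (hp1 : ∀ x, 0 ≤ p1 x) (hq1 : ∀ x, 0 < q1 x)
    (hp1s : ∑ x, p1 x = 1) (hq1s : ∑ x, q1 x = 1)
    (hp2 : ∀ x1 x2, 0 ≤ p2 x1 x2) (hq2 : ∀ x1 x2, 0 < q2 x1 x2)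
    (hp2s : ∀ x1, ∑ x2, p2 x1 x2 = 1) (hq2s : ∀ x1, ∑ x2, q2 x1 x2 = 1)
    (a2 : X → X → ℝ)
    (ha2 : a2 = fun x1 x2 => min (min 1 (p1 x1 / q1 x1) * (p2 x1 x2 / q2 x1 x2)) 1)
    (c : X → ℝ) (hc : c = fun x1 => min 1 (p1 x1 / q1 x1))
    (S : X → ℝ) (hS : S = fun x1 => ∑ z, max (c x1 * p2 x1 z - q2 x1 z) 0)
    (c' : X → ℝ) (hc' : c' = fun x1 => S x1 / (S x1 + 1 - c x1))
    (M' : X → X → ℝ)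
    (hM' : M' = fun x1 z => max (c x1 * p2 x1 z - q2 x1 z) 0 / S x1)
    (p1' : X → ℝ)
    (hp1' : p1' = fun z => max (p1 z - q1 z) 0 / ∑ w, max (p1 w - q1 w) 0)
    (hres : 0 < ∑ w, max (p1 w - q1 w) 0)
    (hSpos : ∀ x1, 0 < S x1) :
    ∀ z1 z2,
      q1 z1 * q2 z1 z2 * a2 z1 z2
        + q1 z1 * (∑ x2, q2 z1 x2 * (1 - a2 z1 x2)) * c' z1 * M' z1 z2
        + (∑ x1, q1 x1 * (∑ x2, q2 x1 x2 * (1 - a2 x1 x2)) * (1 - c' x1))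
            * p1' z1 * p2 z1 z2
      = p1 z1 * p2 z1 z2 := by
  intro z1 z2
  -- basic facts about c
  have hcx : ∀ x, c x = min 1 (p1 x / q1 x) := fun x => by rw [hc]
  have hcle : ∀ x, c x ≤ 1 := by intro x; rw [hcx]; exact min_le_left _ _
  have hcnn : ∀ x, 0 ≤ c x := by
    intro x; rw [hcx]
    exact le_min zero_le_one (div_nonneg (hp1 x) (hq1 x).le)
  -- q1 * c = min q1 p1
  have hq1c : ∀ x, q1 x * c x = min (q1 x) (p1 x) := by
    intro x
    rw [hcx]
    rcases le_total (p1 x / q1 x) 1 with h | h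
    · rw [min_eq_right h, min_eq_right (by
        rw [div_le_one (hq1 x)] at h; linarith)]
      rw [mul_comm]; exact div_mul_cancel₀ _ (hq1 x).ne'
    · rw [min_eq_left h, mul_one, min_eq_left (by
        rw [le_div_iff₀ (hq1 x), one_mul] at h; linarith)]
  -- q2 * a2 = min (c * p2) q2
  have key1 : ∀ x1 x2, q2 x1 x2 * a2 x1 x2 = min (c x1 * p2 x1 x2) (q2 x1 x2) := by
    intro x1 x2
    rw [ha2]
    simp only []
    rw [show min 1 (p1 x1 / q1 x1) * (p2 x1 x2 / q2 x1 x2)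
        = (min 1 (p1 x1 / q1 x1) * p2 x1 x2) / q2 x1 x2 by ring, ← hcx]
    rcases le_total (c x1 * p2 x1 x2 / q2 x1 x2) 1 with h | h
    · rw [min_eq_left h, min_eq_left (by
        rw [div_le_one (hq2 x1 x2)] at h; linarith)]
      rw [mul_comm]; exact div_mul_cancel₀ _ (hq2 x1 x2).ne'
    · rw [min_eq_right h, mul_one, min_eq_right (by
        rw [le_div_iff₀ (hq2 x1 x2), one_mul] at h; linarith)]
  have hminmax : ∀ a b : ℝ, min a b = a - max (a - b) 0 := by
    intro a b
    rcases le_total a b with h | h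
    · rw [min_eq_left h, max_eq_right (by linarith), sub_zero]
    · rw [min_eq_right h, max_eq_left (by linarith)]; ring
  -- rejection mass at level 2
  have key2 : ∀ x1, (∑ x2, q2 x1 x2 * (1 - a2 x1 x2)) = S x1 + 1 - c x1 := by
    intro x1
    have : (∑ x2, q2 x1 x2 * (1 - a2 x1 x2))
        = (∑ x2, q2 x1 x2) - ∑ x2, min (c x1 * p2 x1 x2) (q2 x1 x2) := by
      rw [← Finset.sum_sub_distrib]
      refine Finset.sum_congr rfl fun x2 _ => ?_
      rw [← key1]; ring
    rw [this, hq2s]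
    have : (∑ x2, min (c x1 * p2 x1 x2) (q2 x1 x2))
        = c x1 * (∑ x2, p2 x1 x2) - S x1 := by
      rw [Finset.mul_sum, hS, ← Finset.sum_sub_distrib]
      exact Finset.sum_congr rfl fun x2 _ => hminmax _ _
    rw [this, hp2s]; ring
  have hRpos : ∀ x1, 0 < S x1 + 1 - c x1 := fun x1 => by
    have := hSpos x1; have := hcle x1; linarith
  -- term 2 simplification
  have ht2 : q1 z1 * (∑ x2, q2 z1 x2 * (1 - a2 z1 x2)) * c' z1 * M' z1 z2
      = q1 z1 * max (c z1 * p2 z1 z2 - q2 z1 z2) 0 := by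
    rw [key2, hc', hM']
    have h1 := (hRpos z1).ne'
    have h2 := (hSpos z1).ne'
    field_simp
  -- term 3 inner: (1 - c') * R = 1 - c
  have ht3 : ∀ x1, q1 x1 * (∑ x2, q2 x1 x2 * (1 - a2 x1 x2)) * (1 - c' x1)
      = q1 x1 * (1 - c x1) := by
    intro x1
    rw [key2, hc']
    have h1 := (hRpos x1).ne'
    field_simp
    ring
  have hsum3 : (∑ x1, q1 x1 * (∑ x2, q2 x1 x2 * (1 - a2 x1 x2)) * (1 - c' x1))
      = ∑ w, max (p1 w - q1 w) 0 := by
    rw [Finset.sum_congr rfl fun x1 _ => ht3 x1]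
    have e1 : (∑ x1, q1 x1 * (1 - c x1)) = ∑ x1, (q1 x1 - min (q1 x1) (p1 x1)) := by
      refine Finset.sum_congr rfl fun x1 _ => ?_
      rw [← hq1c]; ring
    rw [e1]
    have e2 : ∀ x1, q1 x1 - min (q1 x1) (p1 x1)
        = max (p1 x1 - q1 x1) 0 + (q1 x1 - p1 x1) := by
      intro x1
      rcases le_total (p1 x1) (q1 x1) with h | h
      · rw [min_eq_right h, max_eq_right (by linarith)]; ring
      · rw [min_eq_left h, max_eq_left (by linarith)]; ring
    rw [Finset.sum_congr rfl fun x1 _ => e2 x1, Finset.sum_add_distrib,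
      Finset.sum_sub_distrib, hq1s, hp1s]
    ring
  rw [mul_assoc, key1, ht2, hsum3, hp1']
  have h3 := hres.ne'
  have hfin : min (c z1 * p2 z1 z2) (q2 z1 z2) + max (c z1 * p2 z1 z2 - q2 z1 z2) 0
      = c z1 * p2 z1 z2 := by rw [hminmax]; ring
  have hfin2 : min (q1 z1) (p1 z1) + max (p1 z1 - q1 z1) 0 = p1 z1 := by
    rcases le_total (p1 z1) (q1 z1) with h | h
    · rw [min_eq_right h, max_eq_right (by linarith)]; ring
    · rw [min_eq_left h, max_eq_left (by linarith)]; ring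
  have : (∑ w, max (p1 w - q1 w) 0) *
      (max (p1 z1 - q1 z1) 0 / ∑ w, max (p1 w - q1 w) 0) * p2 z1 z2
      = max (p1 z1 - q1 z1) 0 * p2 z1 z2 := by field_simp
  calc q1 z1 * min (c z1 * p2 z1 z2) (q2 z1 z2)
        + q1 z1 * max (c z1 * p2 z1 z2 - q2 z1 z2) 0
        + (∑ w, max (p1 w - q1 w) 0) *
          (max (p1 z1 - q1 z1) 0 / ∑ w, max (p1 w - q1 w) 0) * p2 z1 z2
      = q1 z1 * (min (c z1 * p2 z1 z2) (q2 z1 z2)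
          + max (c z1 * p2 z1 z2 - q2 z1 z2) 0)
        + max (p1 z1 - q1 z1) 0 * p2 z1 z2 := by rw [this]; ring
    _ = q1 z1 * c z1 * p2 z1 z2 + max (p1 z1 - q1 z1) 0 * p2 z1 z2 := by
          rw [hfin]; ring
    _ = (min (q1 z1) (p1 z1) + max (p1 z1 - q1 z1) 0) * p2 z1 z2 := by
          rw [hq1c]; ring
    _ = p1 z1 * p2 z1 z2 := by rw [hfin2]
end

section
/- For a single chain of length γ with i.i.d.-structure ratios, the expected accepted length of traversal/block verification equals ∑_{ℓ=1}^{γ} E[a_ℓ], where a_ℓ = min(a_{ℓ-1}·r_ℓ, 1), a_0 = 1, r_ℓ = p(α_ℓ|α^{ℓ-1})/q(α_ℓ|α^{ℓ-1}), and the expectation is over the draft chain α sampled from q. Moreover ∑_ℓ E[a_ℓ] ≥ ∑_ℓ E[∏_{k≤ℓ} min(1, r_k)], the expected accepted length of token-level verification. -/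
open Finset

/-- The prefix `(x0, α_1, …, α_i)` of a drafted chain, as a list (root first). -/
def chainPrefix {X : Type*} (x0 : X) {γ : ℕ} (α : Fin γ → X) (i : ℕ) : List X :=
  x0 :: (List.ofFn α).take i

/-- Probability of drafting the chain `α` token-by-token from the conditional
draft distributions `q` (a kernel assigning to each prefix a distribution on `X`). -/
noncomputable def chainProb {X : Type*} [Fintype X] (q : List X → X → ℝ) (x0 : X)
    {γ : ℕ} (α : Fin γ → X) : ℝ :=
  ∏ i : Fin γ, q (chainPrefix x0 α i) (α i)

/-- Traversal (block) acceptance rates along a chain: `a 0 = 1`,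
`a (i+1) = min (a i * p(α_{i+1}|α^i) / q(α_{i+1}|α^i)) 1`. -/
noncomputable def travRate {X : Type*} (p q : List X → X → ℝ) (x0 : X)
    {γ : ℕ} (α : Fin γ → X) : ℕ → ℝ
  | 0 => 1
  | (i + 1) =>
    if h : i < γ then
      min (travRate p q x0 α i *
        (p (chainPrefix x0 α i) (α ⟨i, h⟩) / q (chainPrefix x0 α i) (α ⟨i, h⟩))) 1
    else travRate p q x0 α i

/-- **Expected accepted length of traversal/block verification on a single chain.**
The expected accepted length equals `∑_{ℓ=1}^{γ} E[a_ℓ]` (expectation over the drafted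
chain `α ~ q`), and it dominates the expected accepted length
`∑_{ℓ=1}^{γ} E[∏_{k ≤ ℓ} min 1 r_k]` of token-level verification. -/
theorem traversal_expected_length_eq_and_ge_token_level
    {X : Type*} [Fintype X] [Nonempty X]
    (γ : ℕ) (x0 : X) (p q : List X → X → ℝ)
    (hp : ∀ l x, 0 ≤ p l x) (hq : ∀ l x, 0 < q l x)
    (hps : ∀ l, ∑ x, p l x = 1) (hqs : ∀ l, ∑ x, q l x = 1) :
    (∑ α : Fin γ → X, chainProb q x0 α * ∑ ℓ ∈ Icc 1 γ, travRate p q x0 α ℓ)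
      = ∑ ℓ ∈ Icc 1 γ, ∑ α : Fin γ → X, chainProb q x0 α * travRate p q x0 α ℓ ∧
    (∑ α : Fin γ → X, chainProb q x0 α *
        ∑ ℓ ∈ Icc 1 γ, ∏ j ∈ Finset.univ.filter (fun j : Fin γ => (j : ℕ) < ℓ),
          min 1 (p (chainPrefix x0 α j) (α j) / q (chainPrefix x0 α j) (α j)))
      ≤ ∑ α : Fin γ → X, chainProb q x0 α * ∑ ℓ ∈ Icc 1 γ, travRate p q x0 α ℓ := by
  have key : ∀ (α : Fin γ → X) (i : ℕ),
      (0 ≤ travRate p q x0 α i ∧ travRate p q x0 α i ≤ 1) ∧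
      (∏ j ∈ Finset.univ.filter (fun j : Fin γ => (j : ℕ) < i),
        min 1 (p (chainPrefix x0 α j) (α j) / q (chainPrefix x0 α j) (α j)))
        ≤ travRate p q x0 α i := by
    intro α i
    induction i with
    | zero =>
      refine ⟨⟨by simp [travRate], by simp [travRate]⟩, ?_⟩
      simp [travRate]
    | succ i ih =>
      obtain ⟨⟨h0, h1⟩, hb⟩ := ih
      by_cases h : i < γ
      · set r := p (chainPrefix x0 α i) (α ⟨i, h⟩) / q (chainPrefix x0 α i) (α ⟨i, h⟩)
          with hrdef
        have hr : 0 ≤ r := div_nonneg (hp _ _) (hq _ _).le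
        have hmin0 : (0:ℝ) ≤ min 1 r := le_min zero_le_one hr
        have hfil : Finset.univ.filter (fun j : Fin γ => (j : ℕ) < i + 1)
            = insert ⟨i, h⟩ (Finset.univ.filter (fun j : Fin γ => (j : ℕ) < i)) := by
          ext j
          simp only [Finset.mem_filter, Finset.mem_univ, true_and, Finset.mem_insert,
            Fin.ext_iff]
          omega
        have hnotmem : (⟨i, h⟩ : Fin γ) ∉ Finset.univ.filter (fun j : Fin γ => (j : ℕ) < i) := by
          simp
        simp only [travRate, dif_pos h]
        refine ⟨⟨le_min (mul_nonneg h0 hr) zero_le_one, min_le_right _ _⟩, ?_⟩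
        rw [hfil, Finset.prod_insert hnotmem]
        have step1 : min 1 r *
            (∏ j ∈ Finset.univ.filter (fun j : Fin γ => (j : ℕ) < i),
              min 1 (p (chainPrefix x0 α j) (α j) / q (chainPrefix x0 α j) (α j)))
            ≤ min 1 r * travRate p q x0 α i :=
          mul_le_mul_of_nonneg_left hb hmin0
        refine le_trans step1 ?_
        rcases le_total r 1 with hr1 | hr1
        · rw [min_eq_right hr1]
          exact le_min (le_of_eq (mul_comm _ _)) (by nlinarith)
        · rw [min_eq_left hr1, one_mul]
          exact le_min (le_mul_of_one_le_right h0 hr1) h1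
      · have hfil : Finset.univ.filter (fun j : Fin γ => (j : ℕ) < i + 1)
            = Finset.univ.filter (fun j : Fin γ => (j : ℕ) < i) := by
          ext j
          have := j.isLt
          simp only [Finset.mem_filter, Finset.mem_univ, true_and]
          omega
        simp only [travRate, dif_neg h]
        exact ⟨⟨h0, h1⟩, hfil ▸ hb⟩
  constructor
  · simp_rw [Finset.mul_sum]
    exact Finset.sum_comm
  · apply Finset.sum_le_sum
    intro α _
    have hprob : 0 ≤ chainProb q x0 α :=
      Finset.prod_nonneg fun i _ => (hq _ _).le
    refine mul_le_mul_of_nonneg_left ?_ hprob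
    exact Finset.sum_le_sum fun ℓ _ => (key α ℓ).2
end
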